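/- arXiv:1412.4852 — 2 statements merged into one kernel-verified Lean document; each statement's English description precedes it below -/
import Mathlib

section
/- Let μ be a Borel probability measure on ℝ with compact support, and let Λ be a countable set of reals containing 0. If ∑_{λ∈Λ} |μ̂(ξ+λ)|² = 1 for all ξ ∈ ℝ, then {e^{-2πiλx} : λ ∈ Λ} is an orthonormal basis of L²(μ); conversely if {e^{-2πiλx} : λ ∈ Λ} is an orthonormal basis of L²(μ), then ∑_{λ∈Λ}|μ̂(ξ+λ)|² = 1 for all ξ. -/
/-!
Write `e_t ∈ L²(μ)` for the exponential `x ↦ e^{-2πitx}`. Then `⟪e_s, e_t⟫ = μ̂(t - s)`, so every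
`e_t` is a unit vector and `∑_{λ∈Λ} |μ̂(ξ + λ)|² = ∑_{λ∈Λ} |⟪e_λ, e_{-ξ}⟫|²`. Because `μ` is a
probability measure carried by a compact set `K`, the `L²(μ)` norm is dominated by the sup norm on
`K`, so Stone–Weierstrass on `C(K)` makes the span of all the `e_t` dense in `L²(μ)`.

The theorem is then an instance of a Hilbert space fact: if a family `(e_i)` is drawn from a set `S`
of unit vectors with dense span, then `∑_i |⟪e_i, x⟫|² = 1` for all `x ∈ S` iff `(e_i)` is an
orthonormal basis. Taking `x = e_j` forces orthonormality, and equality in Bessel's inequality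
puts every `x ∈ S` into the closed span of the `e_i`; the converse is Parseval's identity.
-/

open MeasureTheory

/-- Fourier transform of a measure: `μ̂(ξ) = ∫ e^{-2πiξx} dμ(x)`. -/
noncomputable def muHat (μ : Measure ℝ) (ξ : ℝ) : ℂ :=
  ∫ x, Complex.exp (-2 * Real.pi * Complex.I * ξ * x) ∂μ

open Submodule Set Real
open scoped InnerProductSpace ComplexConjugate BoundedContinuousFunction ENNReal

section Hilbert
variable {𝕜 E ι : Type*} [RCLike 𝕜] [NormedAddCommGroup E] [InnerProductSpace 𝕜 E]

theorem mem_orthogonal_span_range_iff {e : ι → E} {x : E} :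
    x ∈ (span 𝕜 (range e))ᗮ ↔ ∀ i, ⟪e i, x⟫_𝕜 = 0 := by
  rw [← span_singleton_le_iff_mem, ← isOrtho_iff_le, isOrtho_comm, isOrtho_span]
  simp

theorem HilbertBasis.tsum_norm_inner_sq [CompleteSpace E] (b : HilbertBasis ι 𝕜 E) (x : E) :
    ∑' i, ‖⟪b i, x⟫_𝕜‖ ^ 2 = ‖x‖ ^ 2 := by
  have h := b.tsum_inner_mul_inner x x
  have hterm : ∀ i, ⟪x, b i⟫_𝕜 * ⟪b i, x⟫_𝕜 = ((‖⟪b i, x⟫_𝕜‖ ^ 2 : ℝ) : 𝕜) := fun i => by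
    rw [← inner_conj_symm x, RCLike.conj_mul]
    norm_cast
  rw [tsum_congr hterm, ← RCLike.ofReal_tsum, inner_self_eq_norm_sq_to_K] at h
  exact_mod_cast h

theorem Orthonormal.mem_topologicalClosure_span_of_tsum_norm_inner_sq [CompleteSpace E]
    {e : ι → E} (he : Orthonormal 𝕜 e) {x : E} (hx : ∑' i, ‖⟪e i, x⟫_𝕜‖ ^ 2 = ‖x‖ ^ 2) :
    x ∈ (span 𝕜 (range e)).topologicalClosure := by
  set W := (span 𝕜 (range e)).topologicalClosure
  have : CompleteSpace W := (isClosed_topologicalClosure _).completeSpace_coe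
  have hinner : ∀ i, ⟪e i, W.starProjection x⟫_𝕜 = ⟪e i, x⟫_𝕜 := fun i => by
    rw [← inner_starProjection_left_eq_right, starProjection_eq_self_iff.mpr
      (le_topologicalClosure _ (subset_span (mem_range_self i)))]
  have hBessel := he.tsum_inner_products_le (W.starProjection x)
  simp_rw [hinner, hx] at hBessel
  rw [mem_iff_norm_starProjection]
  exact le_antisymm (W.norm_starProjection_apply_le x)
    ((pow_le_pow_iff_left₀ (norm_nonneg _) (norm_nonneg _) two_ne_zero).mp hBessel)

theorem orthonormal_of_tsum_norm_inner_sq_eq_one {e : ι → E} (hnorm : ∀ i, ‖e i‖ = 1)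
    (h : ∀ j, ∑' i, ‖⟪e i, e j⟫_𝕜‖ ^ 2 = 1) : Orthonormal 𝕜 e := by
  classical
  refine ⟨hnorm, fun i j hij => ?_⟩
  have hsum : Summable fun i => ‖⟪e i, e j⟫_𝕜‖ ^ 2 := by
    by_contra hns
    simpa [tsum_eq_zero_of_not_summable hns] using h j
  have hjj : ‖⟪e j, e j⟫_𝕜‖ ^ 2 = 1 := by simp [hnorm]
  have hle := hsum.sum_le_tsum {i, j} fun _ _ => by positivity
  rw [Finset.sum_pair hij, h j, hjj] at hle
  have : ‖⟪e i, e j⟫_𝕜‖ ^ 2 = 0 := le_antisymm (by linarith) (by positivity)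
  simpa using this

theorem forall_tsum_norm_inner_sq_eq_one_iff [CompleteSpace E] {e : ι → E} {S : Set E}
    (hS : (span 𝕜 S).topologicalClosure = ⊤) (hS_norm : ∀ x ∈ S, ‖x‖ = 1) (heS : ∀ i, e i ∈ S) :
    (∀ x ∈ S, ∑' i, ‖⟪e i, x⟫_𝕜‖ ^ 2 = 1) ↔ Orthonormal 𝕜 e ∧ (span 𝕜 (range e))ᗮ = ⊥ := by
  constructor
  · intro h
    have he : Orthonormal 𝕜 e :=
      orthonormal_of_tsum_norm_inner_sq_eq_one (fun i => hS_norm _ (heS i)) fun j => h _ (heS j)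
    refine ⟨he, topologicalClosure_eq_top_iff.mp ?_⟩
    rw [eq_top_iff, ← hS]
    refine topologicalClosure_minimal _ (span_le.mpr fun x hx => ?_) (isClosed_topologicalClosure _)
    exact he.mem_topologicalClosure_span_of_tsum_norm_inner_sq
      (by rw [h x hx, hS_norm x hx]; norm_num)
  · rintro ⟨he, hbot⟩ x hx
    have := (HilbertBasis.mkOfOrthogonalEqBot he hbot).tsum_norm_inner_sq x
    rwa [HilbertBasis.coe_mkOfOrthogonalEqBot, hS_norm x hx, one_pow] at this

end Hilbert

theorem StarAlgebra.adjoin_eq_span_of_star_subset {R A : Type*} [CommSemiring R] [StarRing R]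
    [Semiring A] [StarRing A] [Algebra R A] [StarModule R A] (s : Submonoid A)
    (hs : star (s : Set A) ⊆ s) :
    Subalgebra.toSubmodule (adjoin R (s : Set A)).toSubalgebra = span R s := by
  rw [adjoin_eq_span, union_eq_self_of_subset_right hs, Submonoid.closure_eq]

theorem DenseRange.dense_image_of_dist_le {X Y Z : Type*} [PseudoMetricSpace Y]
    [PseudoMetricSpace Z] {T : X → Y} {R : X → Z} (hT : DenseRange T)
    (hTR : ∀ x y, dist (T x) (T y) ≤ dist (R x) (R y)) {s : Set X} (hs : Dense (R '' s)) :
    Dense (T '' s) := by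
  refine Dense.of_closure (hT.mono ?_)
  rintro _ ⟨x, rfl⟩
  refine Metric.mem_closure_iff.mpr fun ε hε => ?_
  obtain ⟨_, ⟨y, hy, rfl⟩, hxy⟩ :=
    Metric.mem_closure_iff.mp (hs.closure_eq ▸ mem_univ (R x)) ε hε
  exact ⟨T y, mem_image_of_mem T hy, (hTR x y).trans_lt hxy⟩

namespace BoundedContinuousFunction
variable {α : Type*} [TopologicalSpace α] (K : Set α)

noncomputable def restrictStarAlgHom : (α →ᵇ ℂ) →⋆ₐ[ℂ] C(K, ℂ) :=
  (ContinuousMap.compStarAlgHom' ℂ ℂ ⟨((↑) : K → α), continuous_subtype_val⟩).comp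
    (toContinuousMapStarₐ ℂ)

theorem norm_toLp_le_norm_restrictStarAlgHom [MeasurableSpace α] [BorelSpace α] {μ : Measure α}
    [IsProbabilityMeasure μ] [CompactSpace K] (hμK : μ Kᶜ = 0) {p : ℝ≥0∞} [Fact (1 ≤ p)]
    (g : α →ᵇ ℂ) : ‖toLp p μ ℂ g‖ ≤ ‖restrictStarAlgHom K g‖ := by
  have hbound : ∀ᵐ x ∂μ, ‖toLp p μ ℂ g x‖ ≤ ‖restrictStarAlgHom K g‖ := by
    filter_upwards [coeFn_toLp p μ ℂ g, measure_eq_zero_iff_ae_notMem.mp hμK] with x hx hxK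
    rw [hx]
    exact (restrictStarAlgHom K g).norm_coe_le_norm ⟨x, not_not.mp hxK⟩
  simpa [measureUnivNNReal] using Lp.norm_le_of_ae_bound (norm_nonneg _) hbound

end BoundedContinuousFunction

open BoundedContinuousFunction (restrictStarAlgHom norm_toLp_le_norm_restrictStarAlgHom toLp
  coeFn_toLp toLp_denseRange)

noncomputable def fourierExp (t : ℝ) : ℝ →ᵇ ℂ :=
  .ofNormedAddCommGroup (fun x => Complex.exp (-2 * π * Complex.I * t * x)) (by fun_prop) 1
    fun x => by simp [Complex.norm_exp]

theorem fourierExp_apply (t x : ℝ) :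
    fourierExp t x = Complex.exp (-2 * π * Complex.I * t * x) := rfl

theorem conj_fourierExp_apply (t x : ℝ) : conj (fourierExp t x) = fourierExp (-t) x := by
  simp only [fourierExp_apply, ← Complex.exp_conj, map_mul, map_neg, map_ofNat,
    Complex.conj_ofReal, Complex.conj_I, Complex.ofReal_neg]
  ring_nf

theorem star_fourierExp (t : ℝ) : star (fourierExp t) = fourierExp (-t) := by
  ext x
  exact conj_fourierExp_apply t x

theorem fourierExp_add (s t : ℝ) : fourierExp (s + t) = fourierExp s * fourierExp t := by
  ext x
  simp only [BoundedContinuousFunction.coe_mul, Pi.mul_apply, fourierExp_apply, ← Complex.exp_add,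
    Complex.ofReal_add]
  ring_nf

theorem fourierExp_zero : fourierExp 0 = 1 := by
  ext x
  simp [fourierExp_apply]

theorem exists_fourierExp_apply_ne {x y : ℝ} (hxy : x ≠ y) :
    ∃ t, fourierExp t x ≠ fourierExp t y := by
  -- `t (x - y) = 1 / 2` makes `e_t(x) / e_t(y) = e^{-πi} = -1`
  refine ⟨1 / (2 * (x - y)), fun h => ?_⟩
  rw [fourierExp_apply, fourierExp_apply] at h
  obtain ⟨n, hn⟩ := Complex.exp_eq_exp_iff_exists_int.mp h
  have hxy' : (x : ℂ) - y ≠ 0 := by exact_mod_cast sub_ne_zero.mpr hxy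
  have ht : ((1 / (2 * (x - y)) : ℝ) : ℂ) * (x - y) = 1 / 2 := by push_cast; field_simp
  have hc : (2 * π * Complex.I : ℂ) ≠ 0 := by simp [pi_ne_zero]
  have h2n : ((2 * n + 1 : ℤ) : ℂ) * (2 * π * Complex.I) = 0 := by
    push_cast
    linear_combination (-2) * hn - 2 * (2 * π * Complex.I) * ht
  have : 2 * n + 1 = 0 := by exact_mod_cast (mul_eq_zero.mp h2n).resolve_right hc
  omega

noncomputable def fourierExpSubmonoid : Submonoid (ℝ →ᵇ ℂ) where
  carrier := range fourierExp
  one_mem' := ⟨0, fourierExp_zero⟩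
  mul_mem' := by
    rintro _ _ ⟨s, rfl⟩ ⟨t, rfl⟩
    exact ⟨s + t, fourierExp_add s t⟩

theorem dense_restrictStarAlgHom_image_span_fourierExp (K : Set ℝ) [CompactSpace K] :
    Dense (restrictStarAlgHom K '' span ℂ (range fourierExp)) := by
  set S := fourierExpSubmonoid.map (restrictStarAlgHom K)
  have hS : (S : Set C(K, ℂ)) = restrictStarAlgHom K '' range fourierExp := Submonoid.coe_map _ _
  have hstar : star (S : Set C(K, ℂ)) ⊆ S := by
    intro f hf
    obtain ⟨_, ⟨t, rfl⟩, ht⟩ := Submonoid.mem_map.mp (Set.mem_star.mp hf)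
    refine Submonoid.mem_map.mpr ⟨fourierExp (-t), ⟨-t, rfl⟩, ?_⟩
    rw [← star_fourierExp, map_star, ht, star_star]
  set A := StarAlgebra.adjoin ℂ (S : Set C(K, ℂ))
  have hA : (A : Set C(K, ℂ)) = restrictStarAlgHom K '' span ℂ (range fourierExp) :=
    calc (A : Set C(K, ℂ)) = span ℂ (S : Set C(K, ℂ)) :=
          congrArg (fun M : Submodule ℂ C(K, ℂ) => (M : Set C(K, ℂ)))
            (StarAlgebra.adjoin_eq_span_of_star_subset S hstar)
      _ = restrictStarAlgHom K '' span ℂ (range fourierExp) := by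
          rw [hS]
          exact congrArg (fun M : Submodule ℂ C(K, ℂ) => (M : Set C(K, ℂ)))
            (Submodule.map_span (restrictStarAlgHom K).toAlgHom.toLinearMap _).symm
  have hsep : A.SeparatesPoints := by
    intro x y hxy
    obtain ⟨t, ht⟩ := exists_fourierExp_apply_ne (Subtype.coe_ne_coe.mpr hxy)
    have hmem : restrictStarAlgHom K (fourierExp t) ∈ A :=
      StarAlgebra.subset_adjoin ℂ _ (hS ▸ mem_image_of_mem _ (mem_range_self t))
    exact ⟨_, ⟨_, hmem, rfl⟩, ht⟩
  rw [← hA, dense_iff_closure_eq, ← StarSubalgebra.topologicalClosure_coe,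
    ContinuousMap.starSubalgebra_topologicalClosure_eq_top_of_separatesPoints A hsep]
  rfl

theorem muHat_zero (μ : Measure ℝ) [IsProbabilityMeasure μ] : muHat μ 0 = 1 := by
  simp [muHat]

theorem muHat_neg (μ : Measure ℝ) (ξ : ℝ) : muHat μ (-ξ) = conj (muHat μ ξ) := by
  simp only [muHat, ← integral_conj]
  congr with x
  exact (conj_fourierExp_apply ξ x).symm

section L2
variable {μ : Measure ℝ} [IsFiniteMeasure μ]

variable (μ) in
noncomputable def expLp (t : ℝ) : Lp ℂ 2 μ :=
  toLp 2 μ ℂ (fourierExp t)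

theorem inner_expLp_left (t : ℝ) (F : Lp ℂ 2 μ) :
    ⟪expLp μ t, F⟫_ℂ = ∫ x, F x * conj (fourierExp t x) ∂μ := by
  rw [L2.inner_def]
  refine integral_congr_ae ?_
  filter_upwards [coeFn_toLp 2 μ ℂ (fourierExp t)] with x hx
  rw [expLp, hx, RCLike.inner_apply, mul_comm]

theorem inner_expLp_toLp (t : ℝ) {f : ℝ → ℂ} (hf : MemLp f 2 μ) :
    ⟪expLp μ t, hf.toLp f⟫_ℂ = ∫ x, f x * conj (fourierExp t x) ∂μ := by
  rw [inner_expLp_left]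
  refine integral_congr_ae ?_
  filter_upwards [hf.coeFn_toLp] with x hx
  rw [hx]

theorem inner_expLp_expLp (s t : ℝ) : ⟪expLp μ s, expLp μ t⟫_ℂ = muHat μ (t - s) := by
  rw [inner_expLp_left, muHat]
  refine integral_congr_ae ?_
  filter_upwards [coeFn_toLp 2 μ ℂ (fourierExp t)] with x hx
  rw [expLp, hx, conj_fourierExp_apply, sub_eq_add_neg]
  exact congrFun (congrArg DFunLike.coe (fourierExp_add t (-s))).symm x

theorem norm_expLp [IsProbabilityMeasure μ] (t : ℝ) : ‖expLp μ t‖ = 1 := by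
  have h := norm_sq_eq_re_inner (𝕜 := ℂ) (expLp μ t)
  rw [inner_expLp_expLp, sub_self, muHat_zero, RCLike.one_re] at h
  exact (pow_eq_one_iff_of_nonneg (norm_nonneg _) two_ne_zero).mp h

end L2

theorem span_expLp_dense {μ : Measure ℝ} [IsProbabilityMeasure μ] {K : Set ℝ} (hK : IsCompact K)
    (hμK : μ Kᶜ = 0) : (span ℂ (range (expLp μ))).topologicalClosure = ⊤ := by
  have : CompactSpace K := isCompact_iff_compactSpace.mp hK
  set T : (ℝ →ᵇ ℂ) →L[ℂ] Lp ℂ 2 μ := toLp 2 μ ℂ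
  have hspan : (span ℂ (range (expLp μ)) : Set (Lp ℂ 2 μ)) = T '' span ℂ (range fourierExp) := by
    rw [show range (expLp μ) = T '' range fourierExp from range_comp T fourierExp]
    exact congrArg (fun M : Submodule ℂ (Lp ℂ 2 μ) => (M : Set (Lp ℂ 2 μ)))
      (Submodule.map_span (T : (ℝ →ᵇ ℂ) →ₗ[ℂ] Lp ℂ 2 μ) _).symm
  rw [← dense_iff_topologicalClosure_eq_top, hspan]
  refine (toLp_denseRange (p := 2) ℂ μ ℂ ENNReal.ofNat_ne_top).dense_image_of_dist_le
    (fun g h => ?_) (dense_restrictStarAlgHom_image_span_fourierExp K)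
  rw [dist_eq_norm, dist_eq_norm, ← map_sub, ← map_sub]
  exact norm_toLp_le_norm_restrictStarAlgHom K hμK _

section Translation
variable {μ : Measure ℝ} [IsProbabilityMeasure μ] {Λ : Set ℝ}

theorem forall_tsum_norm_muHat_sq_eq_one_iff :
    (∀ ξ : ℝ, ∑' lam : Λ, ‖muHat μ (ξ + lam)‖ ^ 2 = 1) ↔
      ∀ F ∈ range (expLp μ), ∑' lam : Λ, ‖⟪expLp μ lam, F⟫_ℂ‖ ^ 2 = 1 := by
  have h : ∀ ξ (lam : ℝ), ‖muHat μ (ξ + lam)‖ = ‖⟪expLp μ lam, expLp μ (-ξ)⟫_ℂ‖ := fun ξ lam => by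
    rw [inner_expLp_expLp, show -ξ - lam = -(ξ + lam) by ring, muHat_neg, RCLike.norm_conj]
  simp only [forall_mem_range, h]
  exact ⟨fun hQ ξ => by simpa using hQ (-ξ), fun hQ ξ => hQ (-ξ)⟩

theorem integral_exp_mul_conj_exp (s t : ℝ) :
    ∫ x, Complex.exp (-2 * π * Complex.I * s * x) *
      conj (Complex.exp (-2 * π * Complex.I * t * x)) ∂μ = ⟪expLp μ t, expLp μ s⟫_ℂ := by
  rw [inner_expLp_left]
  refine integral_congr_ae ?_
  filter_upwards [coeFn_toLp 2 μ ℂ (fourierExp s)] with x hx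
  rw [expLp, hx]
  rfl

theorem forall_integral_exp_mul_conj_exp_eq_ite_iff :
    (∀ lam ∈ Λ, ∀ lam' ∈ Λ,
      ∫ x, Complex.exp (-2 * π * Complex.I * lam * x) *
        conj (Complex.exp (-2 * π * Complex.I * lam' * x)) ∂μ = if lam = lam' then 1 else 0) ↔
      Orthonormal ℂ fun lam : Λ => expLp μ lam := by
  simp only [integral_exp_mul_conj_exp, orthonormal_iff_ite, Subtype.forall, Subtype.mk.injEq]
  constructor <;> intro h lam hlam lam' hlam' <;> rw [h lam' hlam' lam hlam] <;>
    exact if_congr eq_comm rfl rfl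

theorem forall_ae_eq_zero_iff_orthogonal_span_expLp_eq_bot :
    (∀ f : ℝ → ℂ, MemLp f 2 μ →
      (∀ lam ∈ Λ, ∫ x, f x * conj (Complex.exp (-2 * π * Complex.I * lam * x)) ∂μ = 0) →
        f =ᵐ[μ] 0) ↔
      (span ℂ (range fun lam : Λ => expLp μ lam))ᗮ = ⊥ := by
  rw [Submodule.eq_bot_iff]
  simp only [mem_orthogonal_span_range_iff]
  constructor
  · intro h F hF
    refine Lp.eq_zero_iff_ae_eq_zero.mpr (h F (Lp.memLp F) fun lam hlam => ?_)
    rw [← hF ⟨lam, hlam⟩, inner_expLp_left]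
    rfl
  · intro h f hf hf_orth
    have hzero := h (hf.toLp f) fun lam => by rw [inner_expLp_toLp]; exact hf_orth lam lam.2
    filter_upwards [hf.coeFn_toLp, Lp.coeFn_zero ℂ 2 μ] with x hx h0
    rw [← hx, hzero, h0]

end Translation

theorem stmt9_general (μ : Measure ℝ) [IsProbabilityMeasure μ]
    (K : Set ℝ) (hK : IsCompact K) (hμK : μ Kᶜ = 0)
    (Λ : Set ℝ) :
    (∀ ξ : ℝ, ∑' lam : Λ, ‖muHat μ (ξ + lam)‖ ^ 2 = 1) ↔
    ((∀ lam ∈ Λ, ∀ lam' ∈ Λ,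
        (∫ x : ℝ, Complex.exp (-2 * Real.pi * Complex.I * lam * x) *
          (starRingEnd ℂ) (Complex.exp (-2 * Real.pi * Complex.I * lam' * x)) ∂μ)
        = if lam = lam' then 1 else 0) ∧
      (∀ f : ℝ → ℂ, MemLp f 2 μ →
        (∀ lam ∈ Λ, (∫ x : ℝ, f x *
            (starRingEnd ℂ) (Complex.exp (-2 * Real.pi * Complex.I * lam * x)) ∂μ) = 0) →
        f =ᵐ[μ] 0)) := by
  rw [forall_tsum_norm_muHat_sq_eq_one_iff, forall_integral_exp_mul_conj_exp_eq_ite_iff,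
    forall_ae_eq_zero_iff_orthogonal_span_expLp_eq_bot]
  exact forall_tsum_norm_inner_sq_eq_one_iff (span_expLp_dense hK hμK)
    (forall_mem_range.mpr norm_expLp) fun lam => mem_range_self _

/-- Jorgensen–Pedersen criterion: for a compactly supported Borel
probability measure `μ` and countable `Λ ∋ 0`, `∑_{λ∈Λ}|μ̂(ξ+λ)|² ≡ 1` iff the
exponentials `{e^{-2πiλx}}_{λ∈Λ}` form an orthonormal basis of `L²(μ)`
(orthonormality together with completeness). -/
theorem stmt9 (μ : Measure ℝ) [IsProbabilityMeasure μ]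
    (K : Set ℝ) (hK : IsCompact K) (hμK : μ Kᶜ = 0)
    (Λ : Set ℝ) (hΛ : Λ.Countable) (h0 : (0 : ℝ) ∈ Λ) :
    (∀ ξ : ℝ, ∑' lam : Λ, ‖muHat μ (ξ + lam)‖ ^ 2 = 1) ↔
    ((∀ lam ∈ Λ, ∀ lam' ∈ Λ,
        (∫ x : ℝ, Complex.exp (-2 * Real.pi * Complex.I * lam * x) *
          (starRingEnd ℂ) (Complex.exp (-2 * Real.pi * Complex.I * lam' * x)) ∂μ)
        = if lam = lam' then 1 else 0) ∧
      (∀ f : ℝ → ℂ, MemLp f 2 μ →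
        (∀ lam ∈ Λ, (∫ x : ℝ, f x *
            (starRingEnd ℂ) (Complex.exp (-2 * Real.pi * Complex.I * lam * x)) ∂μ) = 0) →
        f =ᵐ[μ] 0)) :=
  stmt9_general μ K hK hμK Λ
end

section
/- Let {d_n} be integers ≥ 2 and {r_n} positive reals with r_n d_n ≤ 1, and let E(R,D) = ⋂_{n≥0}⋃_{δ∈Σ^n} J_δ be the homogeneous Cantor set built from nested intervals where each J_δ at level n splits into d_{n+1} equally spaced subintervals of length r_{n+1}|J_δ| aligned with both endpoints. Then dim_H(E(R,D)) = liminf_{n→∞} (∑_{j=1}^n ln d_j)/(∑_{j=1}^n ln(1/r_j)). -/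
/-!
Write `N_n = ∏_{j<n} d_j` and `ℓ_n = ∏_{j<n} r_j`, so that `N_n ℓ_n^s ≥ 1` exactly when the
`n`-th ratio is at least `s`.

Upper bound: the `N_n` intervals of level `n` have length `ℓ_n` and cover `E`. For `t` above the
liminf, infinitely often `N_n ℓ_n^t ≤ 1`, so `μH[t] E < ∞`.

Lower bound: expand `x ∈ [0, 1)` in the mixed radix `(d_j)` and use its digits to pick the
nested intervals; this gives a map `point : [0, 1) → E`, and we push Lebesgue measure forward
along it. The left endpoints of level-`n` intervals are at least `ℓ_n` apart per index, and the
children of one interval are `step_n ≥ ℓ_n / (2 d_n)` apart. So if `ℓ_{n+1} ≤ ρ ≤ ℓ_n`, the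
points of `[0, 1)` sent into a `ρ`-ball lie in `O(1 + ρ / ℓ_n)` cells of level `n`, and when
these are at most two adjacent ones, in `O(1 + ρ / step_n)` cells of level `n + 1`. Once
`N_m ℓ_m^s ≥ 1` for all large `m`, this bounds the mass of every `ρ`-ball by `C ρ^s`, and the
mass distribution principle gives `dim_H E ≥ s`.
-/

open Filter Set MeasureTheory Topology Metric
open scoped NNReal ENNReal

theorem dimH_le_of_frequently_card_mul_rpow_le {X : Type*} [EMetricSpace X] [MeasurableSpace X]
    [BorelSpace X] {E : Set X} {ι : ℕ → Type*} [∀ n, Fintype (ι n)] (U : ∀ n, ι n → Set X)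
    (hcov : ∀ n, E ⊆ ⋃ i, U n i) {ℓ : ℕ → ℝ≥0∞} (hℓ : Tendsto ℓ atTop (𝓝 0))
    (hdiam : ∀ n i, ediam (U n i) ≤ ℓ n) {t : ℝ≥0}
    (hfreq : ∃ᶠ n in atTop, (Fintype.card (ι n) : ℝ≥0∞) * ℓ n ^ (t : ℝ) ≤ 1) :
    dimH E ≤ t := by
  refine dimH_le_of_hausdorffMeasure_ne_top (ne_top_of_le_ne_top ENNReal.one_ne_top ?_)
  calc μH[t] E ≤ liminf (fun n => ∑ i, ediam (U n i) ^ (t : ℝ)) atTop :=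
        Measure.hausdorffMeasure_le_liminf_sum _ E ℓ hℓ U (.of_forall hdiam) (.of_forall hcov)
    _ ≤ 1 := liminf_le_of_frequently_le' <| hfreq.mono fun n hn => by
        calc ∑ i, ediam (U n i) ^ (t : ℝ) ≤ ∑ _i : ι n, ℓ n ^ (t : ℝ) :=
              Finset.sum_le_sum fun i _ => ENNReal.rpow_le_rpow (hdiam n i) t.2
          _ ≤ 1 := by simpa using hn

theorem le_dimH_of_measure_closedBall_le {X : Type*} [MetricSpace X] [MeasurableSpace X]
    [BorelSpace X] (μ : Measure X) {E : Set X} (hE : μ E ≠ 0) {s : ℝ} (hs : 0 < s) {C : ℝ≥0∞}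
    (hC : C ≠ ∞) (hball : ∀ x (ρ : ℝ), 0 < ρ → μ (closedBall x ρ) ≤ C * ENNReal.ofReal ρ ^ s) :
    ENNReal.ofReal s ≤ dimH E := by
  have hdiam : ∀ t : Set X, ediam t ≤ 1 → μ t ≤ C * ediam t ^ s := by
    intro t ht
    rcases t.eq_empty_or_nonempty with rfl | ⟨y, hy⟩
    · simp
    have hsub : ∀ ρ : ℝ, 0 ≤ ρ → ediam t ≤ ENNReal.ofReal ρ → t ⊆ closedBall y ρ :=
      fun ρ hρ hdiam z hz => by
        rw [mem_closedBall, dist_edist]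
        exact ENNReal.toReal_le_of_le_ofReal hρ ((edist_le_ediam_of_mem hz hy).trans hdiam)
    rcases eq_or_ne (ediam t) 0 with h0 | h0
    · have hlim : Tendsto (fun ρ : ℝ => C * ENNReal.ofReal ρ ^ s) (𝓝[>] 0)
          (𝓝 (C * ediam t ^ s)) := by
        rw [h0, ← ENNReal.ofReal_zero]
        refine ENNReal.Tendsto.const_mul ?_ (.inr hC)
        exact ((ENNReal.continuous_rpow_const.comp ENNReal.continuous_ofReal).tendsto 0).mono_left
          nhdsWithin_le_nhds
      refine ge_of_tendsto hlim (eventually_nhdsWithin_of_forall fun ρ (hρ : 0 < ρ) => ?_)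
      exact (measure_mono (hsub ρ hρ.le (by simp [h0]))).trans (hball y ρ hρ)
    · have htop : ediam t ≠ ∞ := ne_top_of_le_ne_top ENNReal.one_ne_top ht
      calc μ t ≤ μ (closedBall y (ediam t).toReal) :=
            measure_mono (hsub _ ENNReal.toReal_nonneg (ENNReal.ofReal_toReal htop).ge)
        _ ≤ C * ediam t ^ s := by
            simpa [ENNReal.ofReal_toReal htop] using hball y _ (ENNReal.toReal_pos h0 htop)
  have hle : C⁻¹ • μ ≤ μH[s] := Measure.le_hausdorffMeasure s _ 1 one_pos fun t ht => by
    calc C⁻¹ * μ t ≤ C⁻¹ * (C * ediam t ^ s) := by gcongr; exact hdiam t ht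
      _ ≤ ediam t ^ s := by
        rw [← mul_assoc]
        exact mul_le_of_le_one_left zero_le (ENNReal.inv_mul_le_one C)
  refine le_dimH_of_hausdorffMeasure_ne_zero (d := s.toNNReal) ?_
  rw [Real.coe_toNNReal _ hs.le]
  refine ne_bot_of_le_ne_bot ?_ (Measure.le_iff'.1 hle E)
  simpa [ENNReal.inv_ne_zero, hC] using hE

theorem ENNReal.eq_ofReal_of_forall_lt_of_forall_gt {x : ℝ≥0∞} {L : ℝ}
    (hgt : ∀ t, L < t → x ≤ ENNReal.ofReal t) (hlt : ∀ s, 0 < s → s < L → ENNReal.ofReal s ≤ x) :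
    x = ENNReal.ofReal L := by
  refine le_antisymm (le_of_forall_gt_imp_ge_of_dense fun c hc => ?_)
    (le_of_forall_lt_imp_le_of_dense fun c hc => ?_)
  · obtain ⟨t, -, hLt, htc⟩ := ENNReal.lt_iff_exists_real_btwn.1 hc
    exact (hgt t ((ENNReal.ofReal_lt_ofReal_iff'.1 hLt).1)).trans htc.le
  · obtain ⟨s, -, hcs, hsL⟩ := ENNReal.lt_iff_exists_real_btwn.1 hc
    exact hcs.le.trans (hlt s (ENNReal.ofReal_pos.1 (zero_le.trans_lt hcs))
      ((ENNReal.ofReal_lt_ofReal_iff'.1 hsL).1))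

theorem volume_le_ofReal_of_forall_sub_le {S : Set ℝ} {b : ℝ}
    (hS : ∀ u ∈ S, ∀ v ∈ S, u ≤ v → v - u ≤ b) : volume S ≤ ENNReal.ofReal b := by
  refine (Real.volume_le_diam S).trans (ediam_le fun u hu v hv => ?_)
  rw [edist_dist, Real.dist_eq]
  gcongr
  rcases le_total u v with huv | hvu
  · rw [abs_sub_comm, abs_of_nonneg (by linarith)]
    exact hS u hu v hv huv
  · rw [abs_of_nonneg (by linarith)]
    exact hS v hv u hu hvu

theorem le_rpow_mul_of_one_le_mul_rpow {ρ ℓ N s : ℝ} (hρ : 0 < ρ) (hρℓ : ρ ≤ ℓ) (hs : s ≤ 1)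
    (hN : 1 ≤ N * ℓ ^ s) : ρ ≤ ρ ^ s * (ℓ * N) := by
  have hℓ : 0 < ℓ := hρ.trans_le hρℓ
  calc ρ = ρ ^ s * ρ ^ (1 - s) := by rw [← Real.rpow_add hρ]; norm_num
    _ ≤ ρ ^ s * ℓ ^ (1 - s) := by gcongr
    _ = ρ ^ s * (ℓ / ℓ ^ s) := by rw [Real.rpow_sub hℓ, Real.rpow_one]
    _ ≤ ρ ^ s * (ℓ * N) := by
        gcongr
        rw [div_le_iff₀ (by positivity)]
        nlinarith

noncomputable section

namespace HomogeneousCantor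

variable {d : ℕ → ℕ} {r : ℕ → ℝ}

variable (d r) in
structure Admissible : Prop where
  two_le : ∀ n, 2 ≤ d n
  pos : ∀ n, 0 < r n
  mul_le_one : ∀ n, r n * d n ≤ 1

variable (d) in
def count (n : ℕ) : ℕ := ∏ j ∈ Finset.range n, d j

variable (r) in
def len (n : ℕ) : ℝ := ∏ j ∈ Finset.range n, r j

variable (d r) in
/-- The distance between the left endpoints of consecutive level-`n + 1` intervals inside a
level-`n` interval: `d n` intervals of length `r n * len r n` with `d n - 1` equal gaps. -/
def step (n : ℕ) : ℝ := len r n * (r n + (1 - d n * r n) / (d n - 1))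

variable (d r) in
def leftEnd (n : ℕ) (δ : ℕ → ℕ) : ℝ := ∑ j ∈ Finset.range n, (δ j : ℝ) * step d r j

variable (d r) in
def cylinder (n : ℕ) (δ : ℕ → ℕ) : Set ℝ := Icc (leftEnd d r n δ) (leftEnd d r n δ + len r n)

variable (d r) in
def cantorSet : Set ℝ := ⋂ n, ⋃ (δ : ℕ → ℕ) (_ : ∀ j, δ j < d j), cylinder d r n δ

variable (d r) in
def dimRatio (n : ℕ) : ℝ :=
  (∑ j ∈ Finset.range n, Real.log (d j)) / (∑ j ∈ Finset.range n, Real.log (1 / r j))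

theorem len_zero : len r 0 = 1 := Finset.prod_range_zero _

theorem len_succ (n : ℕ) : len r (n + 1) = len r n * r n := Finset.prod_range_succ _ _

theorem len_pos (hr : ∀ n, 0 < r n) (n : ℕ) : 0 < len r n := Finset.prod_pos fun j _ => hr j

theorem count_succ (n : ℕ) : count d (n + 1) = count d n * d n := Finset.prod_range_succ _ _

theorem count_pos (hd : ∀ n, 0 < d n) (n : ℕ) : 0 < count d n := Finset.prod_pos fun j _ => hd j

theorem leftEnd_congr {n : ℕ} {δ δ' : ℕ → ℕ} (hδ : ∀ j < n, δ j = δ' j) :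
    leftEnd d r n δ = leftEnd d r n δ' :=
  Finset.sum_congr rfl fun j hj => by rw [hδ j (Finset.mem_range.1 hj)]

theorem Admissible.d_ne_zero (h : Admissible d r) (n : ℕ) : d n ≠ 0 := by
  have := h.two_le n
  omega

theorem Admissible.two_le_cast (h : Admissible d r) (n : ℕ) : (2 : ℝ) ≤ d n := by
  exact_mod_cast h.two_le n

theorem Admissible.r_le_half (h : Admissible d r) (n : ℕ) : r n ≤ 1 / 2 := by
  nlinarith [h.mul_le_one n, h.two_le_cast n, h.pos n]

theorem Admissible.len_le_half_pow (h : Admissible d r) (n : ℕ) : len r n ≤ (1 / 2) ^ n := by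
  calc len r n ≤ ∏ _j ∈ Finset.range n, (1 / 2 : ℝ) :=
        Finset.prod_le_prod (fun j _ => (h.pos j).le) fun j _ => h.r_le_half j
    _ = (1 / 2) ^ n := by simp

theorem Admissible.tendsto_len (h : Admissible d r) : Tendsto (len r) atTop (𝓝 0) :=
  squeeze_zero (fun n => (len_pos h.pos n).le) h.len_le_half_pow
    (tendsto_pow_atTop_nhds_zero_of_lt_one (by norm_num) (by norm_num))

theorem Admissible.antitone_len (h : Admissible d r) : Antitone (len r) :=
  antitone_nat_of_succ_le fun n => by
    rw [len_succ]
    nlinarith [len_pos h.pos n, h.r_le_half n]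

theorem Admissible.sub_one_mul_step (h : Admissible d r) (n : ℕ) :
    ((d n : ℝ) - 1) * step d r n = len r n - len r (n + 1) := by
  have : (d n : ℝ) - 1 ≠ 0 := by linarith [h.two_le_cast n]
  rw [step, len_succ]
  field_simp
  ring

theorem Admissible.sum_Ico_sub_one_mul_step (h : Admissible d r) {m M : ℕ} (hmM : m ≤ M) :
    ∑ j ∈ Finset.Ico m M, ((d j : ℝ) - 1) * step d r j = len r m - len r M := by
  simp only [Finset.sum_Ico_eq_sub _ hmM, h.sub_one_mul_step, Finset.sum_range_sub']
  ring

theorem Admissible.mul_len_le_step (h : Admissible d r) (n : ℕ) :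
    r n * len r n ≤ step d r n := by
  have hd : (0 : ℝ) < d n - 1 := by linarith [h.two_le_cast n]
  have : 0 ≤ (1 - d n * r n) / (d n - 1) := div_nonneg (by linarith [h.mul_le_one n]) hd.le
  rw [step]
  nlinarith [len_pos h.pos n]

theorem Admissible.step_pos (h : Admissible d r) (n : ℕ) : 0 < step d r n :=
  (mul_pos (h.pos n) (len_pos h.pos n)).trans_le (h.mul_len_le_step n)

theorem Admissible.len_le_two_mul_step (h : Admissible d r) (n : ℕ) :
    len r n ≤ 2 * d n * step d r n := by
  have := h.sub_one_mul_step n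
  rw [len_succ] at this
  nlinarith [h.two_le_cast n, h.r_le_half n, len_pos h.pos n, h.step_pos n]

theorem Admissible.log_d_le_log_inv_r (h : Admissible d r) (j : ℕ) :
    Real.log (d j) ≤ Real.log (1 / r j) := by
  refine Real.log_le_log (by linarith [h.two_le_cast j]) ?_
  rw [le_div_iff₀ (h.pos j), mul_comm]
  exact h.mul_le_one j

theorem Admissible.sum_log_inv_r_pos (h : Admissible d r) {n : ℕ} (hn : n ≠ 0) :
    0 < ∑ j ∈ Finset.range n, Real.log (1 / r j) := by
  refine Finset.sum_pos (fun j _ => Real.log_pos ?_) (Finset.nonempty_range_iff.2 hn)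
  rw [lt_div_iff₀ (h.pos j)]
  linarith [h.r_le_half j]

theorem Admissible.dimRatio_nonneg (h : Admissible d r) (n : ℕ) : 0 ≤ dimRatio d r n := by
  refine div_nonneg (Finset.sum_nonneg fun j _ => Real.log_nonneg ?_) (Finset.sum_nonneg
    fun j _ => (Real.log_nonneg (by linarith [h.two_le_cast j])).trans (h.log_d_le_log_inv_r j))
  linarith [h.two_le_cast j]

theorem Admissible.dimRatio_le_one (h : Admissible d r) (n : ℕ) : dimRatio d r n ≤ 1 := by
  rcases eq_or_ne n 0 with rfl | hn
  · simp [dimRatio]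
  exact div_le_one_of_le₀ (Finset.sum_le_sum fun j _ => h.log_d_le_log_inv_r j)
    (h.sum_log_inv_r_pos hn).le

theorem Admissible.count_mul_len_rpow (h : Admissible d r) (n : ℕ) (s : ℝ) :
    (count d n : ℝ) * len r n ^ s = Real.exp ((∑ j ∈ Finset.range n, Real.log (d j)) -
      s * ∑ j ∈ Finset.range n, Real.log (1 / r j)) := by
  have hd : ∀ j ∈ Finset.range n, (d j : ℝ) ≠ 0 := fun j _ => by linarith [h.two_le_cast j]
  have hr : ∀ j ∈ Finset.range n, r j ≠ 0 := fun j _ => (h.pos j).ne'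
  rw [Real.exp_sub, ← Real.log_prod hd, Real.exp_log (Finset.prod_pos fun j _ => by
    linarith [h.two_le_cast j]), ← Real.exp_log (len_pos h.pos n), ← Real.exp_mul]
  simp only [one_div, Real.log_inv, Finset.sum_neg_distrib, mul_neg, Real.exp_neg, count, len,
    Real.log_prod hr, Nat.cast_prod, div_inv_eq_mul, mul_comm]

theorem Admissible.one_le_count_mul_len_rpow_iff (h : Admissible d r) {n : ℕ} (hn : n ≠ 0)
    (s : ℝ) : 1 ≤ (count d n : ℝ) * len r n ^ s ↔ s ≤ dimRatio d r n := by
  rw [h.count_mul_len_rpow, Real.one_le_exp_iff, sub_nonneg, dimRatio,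
    le_div_iff₀ (h.sum_log_inv_r_pos hn)]

theorem Admissible.dimH_cantorSet_le (h : Admissible d r) {t : ℝ}
    (hfreq : ∃ᶠ n in atTop, dimRatio d r n < t) : dimH (cantorSet d r) ≤ ENNReal.ofReal t := by
  have ht : 0 ≤ t := by
    obtain ⟨n, hn⟩ := hfreq.exists
    exact (h.dimRatio_nonneg n).trans hn.le
  -- `Σⁿ`, realised as `∀ j : Fin n, Fin (d j)`, indexes the level-`n` cylinders
  let U : ∀ n, (∀ j : Fin n, Fin (d j)) → Set ℝ := fun n i =>
    cylinder d r n fun j => if hj : j < n then i ⟨j, hj⟩ else 0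
  have hcov : ∀ n, cantorSet d r ⊆ ⋃ i, U n i := fun n x hx => by
    obtain ⟨δ, hδ, hxδ⟩ := mem_iUnion₂.1 (mem_iInter.1 hx n)
    refine mem_iUnion.2 ⟨fun j => ⟨δ j, hδ j⟩, ?_⟩
    simp only [U, cylinder] at hxδ ⊢
    rwa [leftEnd_congr (δ' := δ) fun j hj => by simp [hj]]
  have hdiam : ∀ n i, ediam (U n i) ≤ ENNReal.ofReal (len r n) := fun n i => by
    simp [U, cylinder, Real.ediam_Icc]
  refine dimH_le_of_frequently_card_mul_rpow_le (t := t.toNNReal) U hcov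
    (ENNReal.ofReal_zero ▸ ENNReal.tendsto_ofReal h.tendsto_len) hdiam ?_
  refine (hfreq.and_eventually (eventually_ne_atTop 0)).mono fun n ⟨hn, hn₀⟩ => ?_
  have hcard : Fintype.card (∀ j : Fin n, Fin (d j)) = count d n := by
    simp [Fintype.card_pi, count, Fin.prod_univ_eq_prod_range]
  rw [hcard, Real.coe_toNNReal _ ht, ENNReal.ofReal_rpow_of_pos (len_pos h.pos n),
    ← ENNReal.ofReal_natCast, ← ENNReal.ofReal_mul (Nat.cast_nonneg _)]
  exact ENNReal.ofReal_le_one.2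
    (not_le.1 (mt (h.one_le_count_mul_len_rpow_iff hn₀ t).1 (not_le.2 hn))).le

variable (d) in
/-- The index of the cell containing `x` among the `count d n` equal subintervals of `[0, 1)`
(`0` for `x < 0`); their successive quotients give the mixed-radix digits of `x`. -/
def cellIndex (n : ℕ) (x : ℝ) : ℕ := ⌊x * count d n⌋₊

variable (d) in
def digits (x : ℝ) (j : ℕ) : ℕ := cellIndex d (j + 1) x % d j

variable (d r) in
def point (x : ℝ) : ℝ := ∑' j, (digits d x j : ℝ) * step d r j

variable (d r) in
def cantorMeasure : Measure ℝ := (volume.restrict (Ico 0 1)).map (point d r)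

theorem cellIndex_succ_div {n : ℕ} (hd : d n ≠ 0) (x : ℝ) :
    cellIndex d (n + 1) x / d n = cellIndex d n x := by
  have : (d n : ℝ) ≠ 0 := by exact_mod_cast hd
  rw [cellIndex, cellIndex, ← Nat.floor_div_natCast, count_succ, Nat.cast_mul, ← mul_assoc,
    mul_div_cancel_right₀ _ this]

theorem cellIndex_succ {n : ℕ} (hd : d n ≠ 0) (x : ℝ) :
    cellIndex d (n + 1) x = d n * cellIndex d n x + digits d x n := by
  rw [digits, ← cellIndex_succ_div hd, Nat.div_add_mod]

theorem digits_lt {j : ℕ} (hd : d j ≠ 0) (x : ℝ) : digits d x j < d j :=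
  Nat.mod_lt _ (Nat.pos_of_ne_zero hd)

theorem cellIndex_mono (n : ℕ) : Monotone (cellIndex d n) := fun _ _ huv =>
  Nat.floor_mono (mul_le_mul_of_nonneg_right huv (Nat.cast_nonneg _))

theorem cellIndex_le_cellIndex_succ {n : ℕ} (hd : d n ≠ 0) (x : ℝ) :
    cellIndex d n x ≤ cellIndex d (n + 1) x := by
  rw [← cellIndex_succ_div hd]
  exact Nat.div_le_self _ _

theorem monotone_cellIndex_succ_sub {n : ℕ} (hd : d n ≠ 0) :
    Monotone fun x => (cellIndex d (n + 1) x : ℝ) - cellIndex d n x := by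
  have hφ : Monotone fun k : ℕ => k - k / d n := monotone_nat_of_le_succ fun k => by
    have h₁ : (k + 1) / d n ≤ k / d n + 1 := by
      calc (k + 1) / d n ≤ (k + d n) / d n := Nat.div_le_div_right (by omega)
        _ = k / d n + 1 := Nat.add_div_right _ (Nat.pos_of_ne_zero hd)
    have h₂ : k / d n ≤ (k + 1) / d n := Nat.div_le_div_right (by omega)
    have h₃ : k / d n ≤ k := Nat.div_le_self _ _
    omega
  intro u v huv
  have hcast : ∀ x, (cellIndex d (n + 1) x : ℝ) - cellIndex d n x =
      ((cellIndex d (n + 1) x - cellIndex d (n + 1) x / d n : ℕ) : ℝ) := fun x => by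
    rw [cellIndex_succ_div hd, Nat.cast_sub (cellIndex_le_cellIndex_succ hd x)]
  simp only [hcast]
  exact_mod_cast hφ (cellIndex_mono (n + 1) huv)

theorem cellIndex_zero_of_lt_one {x : ℝ} (hx : x < 1) : cellIndex d 0 x = 0 := by
  simpa [cellIndex, count] using hx

theorem sub_mul_count_lt {u v : ℝ} (hu : 0 ≤ u) (n : ℕ) :
    (v - u) * count d n < (cellIndex d n v : ℝ) - cellIndex d n u + 1 := by
  have h₁ : (cellIndex d n u : ℝ) ≤ u * count d n := Nat.floor_le (by positivity)
  have h₂ : v * count d n < cellIndex d n v + 1 := Nat.lt_floor_add_one _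
  linarith

theorem Admissible.digits_mul_step_le (h : Admissible d r) (x : ℝ) (j : ℕ) :
    (digits d x j : ℝ) * step d r j ≤ ((d j : ℝ) - 1) * step d r j := by
  gcongr
  · exact (h.step_pos j).le
  · rw [le_sub_iff_add_le]
    exact_mod_cast digits_lt (h.d_ne_zero j) x

theorem Admissible.summable (h : Admissible d r) (x : ℝ) :
    Summable fun j => (digits d x j : ℝ) * step d r j := by
  refine summable_of_sum_range_le (c := 1) (fun j => by have := h.step_pos j; positivity)
    fun n => ?_
  calc ∑ j ∈ Finset.range n, (digits d x j : ℝ) * step d r j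
      ≤ ∑ j ∈ Finset.range n, ((d j : ℝ) - 1) * step d r j :=
        Finset.sum_le_sum fun j _ => h.digits_mul_step_le x j
    _ ≤ 1 := by
      rw [Finset.range_eq_Ico, h.sum_Ico_sub_one_mul_step n.zero_le, len_zero]
      linarith [len_pos h.pos n]

theorem Admissible.tendsto_leftEnd (h : Admissible d r) (x : ℝ) :
    Tendsto (fun m => leftEnd d r m (digits d x)) atTop (𝓝 (point d r x)) :=
  (h.summable x).hasSum.tendsto_sum_nat

theorem Admissible.leftEnd_le_point (h : Admissible d r) (x : ℝ) (m : ℕ) :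
    leftEnd d r m (digits d x) ≤ point d r x :=
  (h.summable x).sum_le_tsum _ fun j _ => by have := h.step_pos j; positivity

theorem Admissible.point_le_leftEnd_add_len (h : Admissible d r) (x : ℝ) (m : ℕ) :
    point d r x ≤ leftEnd d r m (digits d x) + len r m := by
  refine le_of_tendsto (h.tendsto_leftEnd x) ((eventually_ge_atTop m).mono fun M hM => ?_)
  have htail :
      leftEnd d r M (digits d x) - leftEnd d r m (digits d x) ≤ len r m - len r M := by
    rw [leftEnd, leftEnd, ← Finset.sum_Ico_eq_sub _ hM, ← h.sum_Ico_sub_one_mul_step hM]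
    exact Finset.sum_le_sum fun j _ => h.digits_mul_step_le x j
  linarith [len_pos h.pos M]

theorem Admissible.point_mem_cantorSet (h : Admissible d r) (x : ℝ) :
    point d r x ∈ cantorSet d r :=
  mem_iInter.2 fun m => mem_biUnion (x := digits d x) (fun j => digits_lt (h.d_ne_zero j) x)
    ⟨h.leftEnd_le_point x m, h.point_le_leftEnd_add_len x m⟩

theorem Admissible.measurable_point (h : Admissible d r) : Measurable (point d r) := by
  refine measurable_of_tendsto_metrizable (fun m => ?_) (tendsto_pi_nhds.2 h.tendsto_leftEnd)
  refine Finset.measurable_sum _ fun j _ => Measurable.mul_const ?_ _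
  exact (measurable_from_top (f := fun k : ℕ => ((k % d j : ℕ) : ℝ))).comp
    (Nat.measurable_floor.comp (measurable_id.mul_const _))

theorem Admissible.cantorMeasure_cantorSet_ne_zero (h : Admissible d r) :
    cantorMeasure d r (cantorSet d r) ≠ 0 := by
  refine ne_bot_of_le_ne_bot ?_ (Measure.le_map_apply h.measurable_point.aemeasurable _)
  have : point d r ⁻¹' cantorSet d r = univ := eq_univ_of_forall h.point_mem_cantorSet
  rw [this, Measure.restrict_apply_univ, Real.volume_Ico]
  norm_num

theorem Admissible.leftEnd_succ_sub_cellIndex_mul_len (h : Admissible d r) (m : ℕ) (x : ℝ) :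
    leftEnd d r (m + 1) (digits d x) - cellIndex d (m + 1) x * len r (m + 1) =
      (leftEnd d r m (digits d x) - cellIndex d m x * len r m) +
        (step d r m - r m * len r m) * ((cellIndex d (m + 1) x : ℝ) - cellIndex d m x) := by
  have hK : (cellIndex d (m + 1) x : ℝ) = d m * cellIndex d m x + digits d x m := by
    exact_mod_cast cellIndex_succ (h.d_ne_zero m) x
  have hst := h.sub_one_mul_step m
  rw [len_succ] at hst ⊢
  rw [leftEnd, Finset.sum_range_succ, ← leftEnd, hK]
  linear_combination (-(cellIndex d m x : ℝ)) * hst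

/-- Moving `x` into a cell of larger index moves the left endpoint by at least `len r m` per
index, since the level-`m` intervals do not overlap. -/
theorem Admissible.monotoneOn_leftEnd_sub_cellIndex_mul_len (h : Admissible d r) (m : ℕ) :
    MonotoneOn (fun x => leftEnd d r m (digits d x) - cellIndex d m x * len r m) (Iio 1) := by
  induction m with
  | zero =>
    intro u hu v hv _
    simp [leftEnd, cellIndex_zero_of_lt_one (d := d) hu, cellIndex_zero_of_lt_one (d := d) hv]
  | succ m ih =>
    simp only [h.leftEnd_succ_sub_cellIndex_mul_len]
    refine ih.add (((monotone_cellIndex_succ_sub (h.d_ne_zero m)).const_mul ?_).monotoneOn _)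
    linarith [h.mul_len_le_step m]

theorem Admissible.cellIndex_sub_mul_len_le {u v : ℝ} (h : Admissible d r) (huv : u ≤ v)
    (hv : v < 1) (m : ℕ) :
    ((cellIndex d m v : ℝ) - cellIndex d m u) * len r m ≤
      leftEnd d r m (digits d v) - leftEnd d r m (digits d u) := by
  have := h.monotoneOn_leftEnd_sub_cellIndex_mul_len m (huv.trans_lt hv) hv huv
  simp only at this
  linarith

theorem Admissible.cellIndex_succ_sub_mul_step_le {u v : ℝ} (h : Admissible d r) (huv : u ≤ v)
    (hv : v < 1) {m : ℕ} (hK : cellIndex d m v ≤ cellIndex d m u + 1) :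
    ((cellIndex d (m + 1) v : ℝ) - cellIndex d (m + 1) u - 1) * step d r m ≤
      leftEnd d r (m + 1) (digits d v) - leftEnd d r (m + 1) (digits d u) := by
  have hmono := h.monotoneOn_leftEnd_sub_cellIndex_mul_len m (huv.trans_lt hv) hv huv
  have hrecu := h.leftEnd_succ_sub_cellIndex_mul_len m u
  have hrecv := h.leftEnd_succ_sub_cellIndex_mul_len m v
  have hK' : (cellIndex d m v : ℝ) ≤ cellIndex d m u + 1 := by exact_mod_cast hK
  have hgap := h.mul_len_le_step m
  simp only at hmono
  rw [len_succ] at hrecu hrecv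
  nlinarith [mul_nonneg (sub_nonneg.2 hgap) (sub_nonneg.2 hK'), len_pos h.pos m, h.pos m]

theorem Admissible.sub_one_mul_len_le_point_sub {u v : ℝ} (h : Admissible d r) (huv : u ≤ v)
    (hv : v < 1) (m : ℕ) :
    ((cellIndex d m v : ℝ) - cellIndex d m u - 1) * len r m ≤ point d r v - point d r u := by
  linarith [h.cellIndex_sub_mul_len_le huv hv m, h.leftEnd_le_point v m,
    h.point_le_leftEnd_add_len u m]

theorem Admissible.sub_one_mul_step_sub_len_le_point_sub {u v : ℝ} (h : Admissible d r)
    (huv : u ≤ v) (hv : v < 1) {m : ℕ} (hK : cellIndex d m v ≤ cellIndex d m u + 1) :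
    ((cellIndex d (m + 1) v : ℝ) - cellIndex d (m + 1) u - 1) * step d r m - len r (m + 1) ≤
      point d r v - point d r u := by
  linarith [h.cellIndex_succ_sub_mul_step_le huv hv hK, h.leftEnd_le_point v (m + 1),
    h.point_le_leftEnd_add_len u (m + 1)]

theorem Admissible.sub_le_of_point_sub_le (h : Admissible d r) {s ρ u v : ℝ} {n : ℕ}
    (hs₀ : 0 ≤ s) (hs₁ : s ≤ 1) (hN : 1 ≤ count d n * len r n ^ s)
    (hN' : 1 ≤ count d (n + 1) * len r (n + 1) ^ s) (hρ : len r (n + 1) ≤ ρ) (hρ' : ρ ≤ len r n)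
    (hu : 0 ≤ u) (huv : u ≤ v) (hv : v < 1) (hpoint : point d r v - point d r u ≤ 2 * ρ) :
    v - u ≤ 12 * ρ ^ s := by
  have hρ₀ : 0 < ρ := (len_pos h.pos _).trans_le hρ
  have hℓN : 0 < len r n * count d n :=
    mul_pos (len_pos h.pos n) (by exact_mod_cast count_pos (fun j => (h.d_ne_zero j).bot_lt) n)
  have hcoarse : ρ ≤ ρ ^ s * (len r n * count d n) :=
    le_rpow_mul_of_one_le_mul_rpow hρ₀ hρ' hs₁ hN
  have hfine : 1 ≤ ρ ^ s * count d (n + 1) := by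
    refine hN'.trans ?_
    rw [mul_comm]
    gcongr
    exact (len_pos h.pos _).le
  have hρs : 0 < ρ ^ s := Real.rpow_pos_of_pos hρ₀ s
  rcases le_or_gt 2 ((cellIndex d n v : ℝ) - cellIndex d n u) with hfar | hnear
  · have h₁ := h.sub_one_mul_len_le_point_sub huv hv n
    have h₂ := sub_mul_count_lt (d := d) (v := v) hu n
    have : (v - u) * (len r n * count d n) ≤ 6 * ρ ^ s * (len r n * count d n) := by
      nlinarith [len_pos h.pos n]
    nlinarith
  · have hK : cellIndex d n v ≤ cellIndex d n u + 1 := by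
      have : (cellIndex d n v : ℝ) < cellIndex d n u + 2 := by linarith
      have : cellIndex d n v < cellIndex d n u + 2 := by exact_mod_cast this
      omega
    have h₁ := h.sub_one_mul_step_sub_len_le_point_sub huv hv hK
    have h₂ := sub_mul_count_lt (d := d) (v := v) hu (n + 1)
    rcases le_or_gt ((cellIndex d (n + 1) v : ℝ) - cellIndex d (n + 1) u) 3 with hfew | hmany
    · nlinarith
    · have hst := h.step_pos n
      have hcount : len r n * count d n ≤ 2 * step d r n * count d (n + 1) := by
        rw [count_succ, Nat.cast_mul]
        nlinarith [h.len_le_two_mul_step n, (Nat.cast_nonneg (count d n) : (0 : ℝ) ≤ _)]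
      have : (v - u) * (len r n * count d n) ≤ 12 * ρ ^ s * (len r n * count d n) := by
        nlinarith
      nlinarith

theorem Admissible.exists_len_succ_le_lt (h : Admissible d r) {ρ : ℝ} (hρ : 0 < ρ) {n₀ : ℕ}
    (hρn₀ : ρ < len r n₀) : ∃ n, n₀ ≤ n ∧ len r (n + 1) ≤ ρ ∧ ρ < len r n := by
  classical
  have hex : ∃ m, len r m ≤ ρ :=
    (h.tendsto_len.eventually (gt_mem_nhds hρ)).exists.imp fun _ => le_of_lt
  have hlt : n₀ < Nat.find hex := by
    by_contra! hle
    exact (hρn₀.trans_le (h.antitone_len hle)).not_ge (Nat.find_spec hex)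
  refine ⟨Nat.find hex - 1, by omega, ?_, not_le.1 (Nat.find_min hex (by omega))⟩
  rw [Nat.sub_add_cancel (by omega)]
  exact Nat.find_spec hex

theorem Admissible.cantorMeasure_closedBall_le (h : Admissible d r) {s : ℝ} (hs₀ : 0 ≤ s)
    (hs₁ : s ≤ 1) {n₀ : ℕ} (hcount : ∀ n ≥ n₀, 1 ≤ (count d n : ℝ) * len r n ^ s) (x : ℝ)
    {ρ : ℝ} (hρ : 0 < ρ) :
    cantorMeasure d r (closedBall x ρ) ≤ ENNReal.ofReal (12 / len r n₀ ^ s * ρ ^ s) := by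
  have hℓ₀ : 0 < len r n₀ ^ s := Real.rpow_pos_of_pos (len_pos h.pos n₀) s
  have hℓ₁ : len r n₀ ^ s ≤ 1 :=
    Real.rpow_le_one (len_pos h.pos n₀).le (len_zero (r := r) ▸ h.antitone_len n₀.zero_le) hs₀
  rw [cantorMeasure, Measure.map_apply h.measurable_point measurableSet_closedBall,
    Measure.restrict_apply (h.measurable_point measurableSet_closedBall)]
  rcases le_or_gt (len r n₀) ρ with hbig | hsmall
  · calc volume (point d r ⁻¹' closedBall x ρ ∩ Ico 0 1) ≤ volume (Ico (0 : ℝ) 1) :=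
          measure_mono inter_subset_right
      _ = ENNReal.ofReal 1 := by simp
      _ ≤ _ := by
        gcongr
        rw [div_mul_eq_mul_div, le_div_iff₀ hℓ₀]
        have : len r n₀ ^ s ≤ ρ ^ s := by gcongr; exact (len_pos h.pos n₀).le
        linarith
  obtain ⟨n, hn₀, hρn, hρn'⟩ := h.exists_len_succ_le_lt hρ hsmall
  have hsep : ∀ u ∈ point d r ⁻¹' closedBall x ρ ∩ Ico 0 1,
      ∀ v ∈ point d r ⁻¹' closedBall x ρ ∩ Ico 0 1, u ≤ v → v - u ≤ 12 * ρ ^ s := by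
    rintro u ⟨hu, hu₀, -⟩ v ⟨hv, -, hv₁⟩ huv
    refine h.sub_le_of_point_sub_le hs₀ hs₁ (hcount n hn₀) (hcount (n + 1) (by omega)) hρn
      hρn'.le hu₀ huv hv₁ ?_
    have := dist_triangle_right (point d r v) (point d r u) x
    rw [mem_preimage, mem_closedBall] at hu hv
    linarith [le_abs_self (point d r v - point d r u), Real.dist_eq (point d r v) (point d r u)]
  calc volume (point d r ⁻¹' closedBall x ρ ∩ Ico 0 1) ≤ ENNReal.ofReal (12 * ρ ^ s) :=
        volume_le_ofReal_of_forall_sub_le hsep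
    _ ≤ _ := by
      gcongr
      rw [le_div_iff₀ hℓ₀]
      linarith

theorem Admissible.le_dimH_cantorSet (h : Admissible d r) {s : ℝ} (hs : 0 < s)
    (hev : ∀ᶠ n in atTop, s < dimRatio d r n) : ENNReal.ofReal s ≤ dimH (cantorSet d r) := by
  obtain ⟨n₀, hn₀⟩ := eventually_atTop.1 (hev.and (eventually_ne_atTop 0))
  have hs₁ : s ≤ 1 := ((hn₀ n₀ le_rfl).1.trans_le (h.dimRatio_le_one n₀)).le
  have hcount : ∀ n ≥ n₀, 1 ≤ (count d n : ℝ) * len r n ^ s := fun n hn =>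
    (h.one_le_count_mul_len_rpow_iff (hn₀ n hn).2 s).2 (hn₀ n hn).1.le
  refine le_dimH_of_measure_closedBall_le _ h.cantorMeasure_cantorSet_ne_zero hs
    (C := ENNReal.ofReal (12 / len r n₀ ^ s)) ENNReal.ofReal_ne_top fun x ρ hρ => ?_
  rw [ENNReal.ofReal_rpow_of_pos hρ,
    ← ENNReal.ofReal_mul (div_nonneg (by norm_num) (Real.rpow_nonneg (len_pos h.pos n₀).le s))]
  exact h.cantorMeasure_closedBall_le hs.le hs₁ hcount x hρ

end HomogeneousCantor

end

open HomogeneousCantor in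
/-- Hausdorff dimension formula for the homogeneous Cantor set
`E(R,D) = ⋂ₙ ⋃_{δ∈Σⁿ} J_δ`, where each level-`n` interval of length
`ℓₙ = ∏_{j≤n} rⱼ` splits into `d_{n+1}` equally spaced subintervals of length
`ℓ_{n+1}` aligned with both endpoints: the left endpoint of `J_{δ₁⋯δₙ}` is
`∑_{j<n} δⱼ · stepⱼ` with `stepⱼ = ℓⱼ (rⱼ + (1 - dⱼrⱼ)/(dⱼ-1))`. Then
`dim_H E = liminf (∑_{j≤n} ln dⱼ)/(∑_{j≤n} ln(1/rⱼ))`. -/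
theorem stmt19 (d : ℕ → ℕ) (hd : ∀ n, 2 ≤ d n)
    (r : ℕ → ℝ) (hr : ∀ n, 0 < r n) (hrd : ∀ n, r n * d n ≤ 1)
    (len : ℕ → ℝ) (hlen : ∀ n, len n = ∏ j ∈ Finset.range n, r j)
    (step : ℕ → ℝ)
    (hstep : ∀ n, step n = len n * (r n + (1 - d n * r n) / (d n - 1)))
    (E : Set ℝ)
    (hE : E = ⋂ n : ℕ, ⋃ (δ : ℕ → ℕ) (_ : ∀ j, δ j < d j),
      Set.Icc (∑ j ∈ Finset.range n, (δ j : ℝ) * step j)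
              ((∑ j ∈ Finset.range n, (δ j : ℝ) * step j) + len n)) :
    dimH E = ENNReal.ofReal (liminf (fun n =>
      (∑ j ∈ Finset.range n, Real.log (d j)) /
      (∑ j ∈ Finset.range n, Real.log (1 / r j))) atTop) := by
  obtain rfl : len = HomogeneousCantor.len r := funext hlen
  obtain rfl : step = HomogeneousCantor.step d r := funext hstep
  obtain rfl : E = cantorSet d r := hE
  have h : Admissible d r := ⟨hd, hr, hrd⟩
  change dimH (cantorSet d r) = ENNReal.ofReal (liminf (dimRatio d r) atTop)
  have hbdd : IsBoundedUnder (· ≤ ·) atTop (dimRatio d r) :=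
    isBoundedUnder_of ⟨1, h.dimRatio_le_one⟩
  have hbdd' : IsBoundedUnder (· ≥ ·) atTop (dimRatio d r) :=
    isBoundedUnder_of ⟨0, h.dimRatio_nonneg⟩
  exact ENNReal.eq_ofReal_of_forall_lt_of_forall_gt
    (fun t ht => h.dimH_cantorSet_le (frequently_lt_of_liminf_lt hbdd.isCoboundedUnder_ge ht))
    (fun s hs hsL => h.le_dimH_cantorSet hs (eventually_lt_of_lt_liminf hsL hbdd'))
end
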